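/- Let (G₁,ν¹) and (G₂,ν²) be weighted graphs with controlled weights, and suppose φ:G₁→G₂ is a rough isometry (each graph being viewed as a metric measure space with its graph distance and the measure ν(A)=Σ_{x∈A}ν_x). If (G₁,ν¹) satisfies volume doubling (VD), then (G₂,ν²) satisfies volume doubling (VD). -/

import Mathlib

open scoped Classical ENNReal

noncomputable section

/-- A weighted graph: a countably infinite, locally finite, connected simple graph
with symmetric nonnegative edge weights `nu`, positive exactly on edges. -/
structure WeightedGraph (V : Type*) [Countable V] [Infinite V] where
  G : SimpleGraph V
  connected : G.Connected
  locallyFinite : ∀ x : V, (G.neighborSet x).Finite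
  ball_finite : ∀ (x : V) (r : ℝ), {y : V | (G.dist x y : ℝ) < r}.Finite
  nu : V → V → ℝ
  nu_symm : ∀ x y, nu x y = nu y x
  nu_nonneg : ∀ x y, 0 ≤ nu x y
  nu_pos_iff : ∀ x y, 0 < nu x y ↔ G.Adj x y

namespace WeightedGraph

variable {V : Type*} [Countable V] [Infinite V] (W : WeightedGraph V)

/-- The vertex weight `ν_x = Σ_y ν_{xy}`. -/
def nuV (x : V) : ℝ := ∑ y ∈ (W.locallyFinite x).toFinset, W.nu x y

/-- The ball `B(x,r) = {y : d(x,y) < r}` (with respect to the graph distance),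
as a finite set. -/
def ball (x : V) (r : ℝ) : Finset V := (W.ball_finite x r).toFinset

/-- The volume `V(x,r) = ν(B(x,r))`. -/
def vol (x : V) (r : ℝ) : ℝ := ∑ y ∈ W.ball x r, W.nuV y

/-- `B̄(x,r)`: the ball together with its exterior boundary. -/
def cball (x : V) (r : ℝ) : Set V :=
  (W.ball x r : Set V) ∪ {z : V | ∃ y ∈ W.ball x r, W.G.Adj z y}

/-- `Γ(f,f)(x) = Σ_{y∼x} (f(x)-f(y))² ν_{xy}`. -/
def gamma (f : V → ℝ) (x : V) : ℝ :=
  ∑ y ∈ (W.locallyFinite x).toFinset, (f x - f y) ^ 2 * W.nu x y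

/-- The graph Laplacian `Δf(x) = ν_x⁻¹ Σ_y ν_{xy} (f(y)-f(x))`. -/
def lap (f : V → ℝ) (x : V) : ℝ :=
  (W.nuV x)⁻¹ * ∑ y ∈ (W.locallyFinite x).toFinset, W.nu x y * (f y - f x)

/-- Controlled weights: `ν_{xy} ≥ p₀ ν_x` whenever `x ∼ y`. -/
def ControlledWeights : Prop :=
  ∃ p₀ : ℝ, 0 < p₀ ∧ ∀ x y : V, W.G.Adj x y → p₀ * W.nuV x ≤ W.nu x y

/-- Volume doubling. -/
def VD : Prop :=
  ∃ C : ℝ, 0 < C ∧ ∀ (x : V) (R : ℝ), 0 < R → W.vol x (2 * R) ≤ C * W.vol x R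

/-- The weighted average of `f` over the ball `B(x,R)`. -/
def avg (f : V → ℝ) (x : V) (R : ℝ) : ℝ :=
  (W.vol x R)⁻¹ * ∑ y ∈ W.ball x R, f y * W.nuV y

/-- The Poincaré inequality `PI(Ψ)`. -/
def PI (Psi : ℝ → ℝ) : Prop :=
  ∃ C : ℝ, 0 < C ∧ ∀ (x : V) (R : ℝ), 1 ≤ R → ∀ f : V → ℝ,
    ∑ y ∈ W.ball x R, (f y - W.avg f x R) ^ 2 * W.nuV y ≤
      C * Psi R * ∑ y ∈ W.ball x R, W.gamma f y

/-- The cut-off Sobolev inequality `CS(Ψ)`. -/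
def CS (Psi : ℝ → ℝ) : Prop :=
  ∃ θ : ℝ, θ ∈ Set.Ioc (0 : ℝ) 1 ∧ ∃ c₁ : ℝ, 0 < c₁ ∧ ∃ c₂ : ℝ, 0 < c₂ ∧
    ∀ (x₀ : V) (R : ℝ), 1 ≤ R → ∃ φ : V → ℝ,
      (∀ x ∈ W.ball x₀ (R / 2), 1 ≤ φ x) ∧
      (∀ x, x ∉ W.ball x₀ R → φ x = 0) ∧
      (∀ x y : V, |φ x - φ y| ≤ c₁ * ((W.G.dist x y : ℝ) / R) ^ θ) ∧
      (∀ (x₁ : V) (s : ℝ), 1 ≤ s → s ≤ R → ∀ f : V → ℝ,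
        ∑ x ∈ W.ball x₁ s, (f x) ^ 2 * W.gamma φ x ≤
          c₂ * (s / R) ^ (2 * θ) *
            (∑ x ∈ W.ball x₁ (2 * s), W.gamma f x +
              (Psi s)⁻¹ * ∑ x ∈ W.ball x₁ (2 * s), W.nuV x * (f x) ^ 2))

/-- The parabolic Harnack inequality `PHI(Ψ)`. -/
def PHI (Psi : ℝ → ℝ) : Prop :=
  ∃ C : ℝ, 0 < C ∧ ∀ (x₀ : V) (R : ℝ), 1 ≤ R →
    ∀ u : ℝ → V → ℝ,
      (∀ t ∈ Set.Ioo (0 : ℝ) (4 * Psi R), ∀ x ∈ W.cball x₀ (2 * R), 0 ≤ u t x) →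
      (∀ x ∈ W.ball x₀ (2 * R), ∀ t ∈ Set.Ioo (0 : ℝ) (4 * Psi R),
        HasDerivAt (fun s : ℝ => u s x) (W.lap (u t) x) t) →
      ∀ t₁ ∈ Set.Ioo (Psi R) (2 * Psi R), ∀ x₁ ∈ W.ball x₀ R,
        ∀ t₂ ∈ Set.Ioo (3 * Psi R) (4 * Psi R), ∀ x₂ ∈ W.ball x₀ R,
          u t₁ x₁ ≤ C * u t₂ x₂

/-- The elliptic Harnack inequality `EHI`. -/
def EHI : Prop :=
  ∃ C : ℝ, 0 < C ∧ ∀ (x : V) (R : ℝ), 1 ≤ R → ∀ u : V → ℝ,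
    (∀ y ∈ W.cball x R, 0 ≤ u y) →
    (∀ y ∈ W.ball x R, W.lap u y = 0) →
    ∀ y₁ ∈ W.ball x (R / 2), ∀ y₂ ∈ W.ball x (R / 2), u y₁ ≤ C * u y₂

/-- The energy `(1/2) Σ_x Σ_y (f(x)-f(y))² ν_{xy}`, as an extended real. -/
def energy (f : V → ℝ) : ℝ≥0∞ :=
  (1 / 2 : ℝ≥0∞) * ∑' x : V, ∑' y : V, ENNReal.ofReal ((f x - f y) ^ 2 * W.nu x y)

/-- The inverse of the effective resistance between `A` and `B`. -/
def resInv (A B : Set V) : ℝ≥0∞ :=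
  ⨅ f ∈ {f : V → ℝ | (∀ x ∈ A, f x = 1) ∧ (∀ x ∈ B, f x = 0)}, W.energy f

/-- The effective resistance between `A` and `B`. -/
def reff (A B : Set V) : ℝ≥0∞ := (W.resInv A B)⁻¹

/-- The resistance estimate `RES(Ψ)`. -/
def RES (Psi : ℝ → ℝ) : Prop :=
  ∃ c₁ c₂ : ℝ, 0 < c₁ ∧ 0 < c₂ ∧ ∀ (x : V) (R : ℝ), 1 ≤ R →
    ENNReal.ofReal (c₁ * Psi R / W.vol x R) ≤
        W.reff (W.ball x R : Set V) ((W.ball x (2 * R) : Set V)ᶜ) ∧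
      W.reff (W.ball x R : Set V) ((W.ball x (2 * R) : Set V)ᶜ) ≤
        ENNReal.ofReal (c₂ * Psi R / W.vol x R)

/-- The heat kernel `p_t(x,y) = (exp(tΔ) 1_{y})(x) / ν_y`, where the operator
exponential is given by its (entrywise absolutely convergent) power series. -/
def heatKernel (t : ℝ) (x y : V) : ℝ :=
  (∑' n : ℕ, t ^ n / (n.factorial : ℝ) *
      (W.lap^[n] (fun z : V => if z = y then (1 : ℝ) else 0)) x) / W.nuV y

/-- The two-sided sub-Gaussian heat kernel estimate `HK(Ψ)` with `Ψ(R) = R^β`. -/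
def HK (β : ℝ) : Prop :=
  ∃ c₁ c₂ c₃ c₄ : ℝ, 0 < c₁ ∧ 0 < c₂ ∧ 0 < c₃ ∧ 0 < c₄ ∧
    ∀ (x y : V) (t : ℝ), max 1 (W.G.dist x y : ℝ) ≤ t →
      c₁ * Real.exp (-(((c₂ * (W.G.dist x y : ℝ)) ^ β / t) ^ (1 / (β - 1)))) /
          W.vol x (t ^ (1 / β)) ≤ W.heatKernel t x y ∧
        W.heatKernel t x y ≤
          c₃ * Real.exp (-(((c₄ * (W.G.dist x y : ℝ)) ^ β / t) ^ (1 / (β - 1)))) /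
            W.vol x (t ^ (1 / β))

end WeightedGraph

/-- A rough isometry between weighted graphs, viewed as metric measure spaces with
the graph distance and the measure `ν`. -/
def GraphRoughIsometry {V₁ V₂ : Type*} [Countable V₁] [Infinite V₁]
    [Countable V₂] [Infinite V₂]
    (W₁ : WeightedGraph V₁) (W₂ : WeightedGraph V₂) (φ : V₁ → V₂) : Prop :=
  ∃ C₁ C₂ C₃ : ℝ, 0 < C₁ ∧ 1 < C₂ ∧ 1 < C₃ ∧
    (∀ w : V₂, ∃ x : V₁, (W₂.G.dist (φ x) w : ℝ) < C₁) ∧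
    (∀ x y : V₁,
      C₂⁻¹ * ((W₁.G.dist x y : ℝ) - C₁) ≤ (W₂.G.dist (φ x) (φ y) : ℝ) ∧
        (W₂.G.dist (φ x) (φ y) : ℝ) ≤ C₂ * ((W₁.G.dist x y : ℝ) + C₁)) ∧
    (∀ x : V₁,
      C₃⁻¹ * W₁.vol x C₁ ≤ W₂.vol (φ x) C₁ ∧ W₂.vol (φ x) C₁ ≤ C₃ * W₁.vol x C₁)

end

/-!
Given `w ∈ G₂`, pick `x₀` with `d(φ x₀, w) < C₁`. The ball `B₂(w, R)` is covered by the
`C₁`-balls around the images of `B₁(x₀, αR)`; conversely the `C₁`-balls around the images of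
`B₁(x₀, R)` lie in `B₂(w, αR)` and overlap boundedly often, since points of `G₁` with close images
are close. Comparing `C₁`-balls through `φ` gives `V₂(w, R) ≲ V₁(x₀, αR)` and
`V₁(x₀, R) ≲ V₂(w, αR)` for `R ≥ 1`, so doubling in `G₁` yields doubling in `G₂` at large scales.
Controlled weights bound the volume of a ball of fixed radius by a multiple of the weight of its
centre; this bounds the overlap (in `G₁`) and handles small scales (in `G₂`).
-/

open Finset

namespace Finset

variable {α β : Type*}

theorem sum_sum_eq_sum_biUnion_card_mul (S : Finset α) (f : α → Finset β) (g : β → ℝ) :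
    ∑ a ∈ S, ∑ b ∈ f a, g b = ∑ b ∈ S.biUnion f, (#{a ∈ S | b ∈ f a} : ℝ) * g b := by
  rw [sum_comm' (t' := S.biUnion f) (s' := fun b => {a ∈ S | b ∈ f a})]
  · simp only [sum_const, nsmul_eq_mul]
  · intro a b
    simp only [mem_filter, mem_biUnion]
    exact ⟨fun h => ⟨h, a, h⟩, fun h => h.1⟩

theorem sum_biUnion_le_sum_sum (S : Finset α) (f : α → Finset β) {g : β → ℝ}
    (hg : ∀ b, 0 ≤ g b) : ∑ b ∈ S.biUnion f, g b ≤ ∑ a ∈ S, ∑ b ∈ f a, g b := by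
  rw [sum_sum_eq_sum_biUnion_card_mul]
  refine sum_le_sum fun b hb => le_mul_of_one_le_left (hg b) ?_
  obtain ⟨a, ha, hba⟩ := mem_biUnion.1 hb
  exact_mod_cast card_pos.2 ⟨a, mem_filter.2 ⟨ha, hba⟩⟩

theorem sum_sum_le_mul_sum_biUnion (S : Finset α) (f : α → Finset β) {g : β → ℝ}
    (hg : ∀ b, 0 ≤ g b) {N : ℝ} (hN : ∀ a ∈ S, ∀ b ∈ f a, (#{a' ∈ S | b ∈ f a'} : ℝ) ≤ N) :
    ∑ a ∈ S, ∑ b ∈ f a, g b ≤ N * ∑ b ∈ S.biUnion f, g b := by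
  rw [sum_sum_eq_sum_biUnion_card_mul, mul_sum]
  refine sum_le_sum fun b hb => mul_le_mul_of_nonneg_right ?_ (hg b)
  obtain ⟨a, ha, hba⟩ := mem_biUnion.1 hb
  exact hN a ha b hba

end Finset

namespace WeightedGraph

variable {V : Type*} [Countable V] [Infinite V] (W : WeightedGraph V)

theorem mem_ball {x y : V} {r : ℝ} : y ∈ W.ball x r ↔ (W.G.dist x y : ℝ) < r := by
  simp [ball]

theorem mem_neighbors {x y : V} : y ∈ (W.locallyFinite x).toFinset ↔ W.G.Adj x y := by
  simp

theorem ball_mono (x : V) {r r' : ℝ} (h : r ≤ r') : W.ball x r ⊆ W.ball x r' :=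
  fun _ hy => W.mem_ball.2 ((W.mem_ball.1 hy).trans_le h)

theorem ball_one (x : V) : W.ball x 1 = {x} := by
  ext y
  rw [mem_ball, mem_singleton, Nat.cast_lt_one, W.connected.dist_eq_zero_iff, eq_comm]

theorem dist_le_dist_add_dist (x y z : V) :
    (W.G.dist x z : ℝ) ≤ W.G.dist x y + W.G.dist y z := by
  exact_mod_cast W.connected.dist_triangle

theorem nuV_nonneg (x : V) : 0 ≤ W.nuV x :=
  sum_nonneg fun y _ => W.nu_nonneg x y

theorem nu_le_nuV {x y : V} (h : W.G.Adj x y) : W.nu x y ≤ W.nuV x :=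
  single_le_sum (fun z _ => W.nu_nonneg x z) (W.mem_neighbors.2 h)

theorem nuV_pos (x : V) : 0 < W.nuV x := by
  obtain ⟨y, hy⟩ := W.connected.preconnected.exists_adj_of_nontrivial x
  exact ((W.nu_pos_iff x y).2 hy).trans_le (W.nu_le_nuV hy)

theorem vol_nonneg (x : V) (r : ℝ) : 0 ≤ W.vol x r :=
  sum_nonneg fun y _ => W.nuV_nonneg y

theorem vol_mono (x : V) {r r' : ℝ} (h : r ≤ r') : W.vol x r ≤ W.vol x r' :=
  sum_le_sum_of_subset_of_nonneg (W.ball_mono x h) fun y _ _ => W.nuV_nonneg y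

theorem vol_one (x : V) : W.vol x 1 = W.nuV x := by
  simp [vol, ball_one]

theorem nuV_le_vol (x : V) {r : ℝ} (hr : 0 < r) : W.nuV x ≤ W.vol x r :=
  single_le_sum (fun y _ => W.nuV_nonneg y) (W.mem_ball.2 (by simpa using hr))

theorem ball_add_one_subset (x : V) {r : ℝ} (hr : 0 < r) :
    W.ball x (r + 1) ⊆
      (W.ball x r).biUnion fun z => insert z (W.locallyFinite z).toFinset := by
  intro y hy
  rw [mem_ball] at hy
  by_cases hyr : (W.G.dist x y : ℝ) < r
  · exact mem_biUnion.2 ⟨y, W.mem_ball.2 hyr, mem_insert_self _ _⟩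
  obtain ⟨p, hp⟩ := W.connected.exists_walk_length_eq_dist y x
  cases p with
  | nil => simp only [SimpleGraph.dist_self, Nat.cast_zero, not_lt] at hyr; linarith
  | @cons _ z _ hyz q =>
    refine mem_biUnion.2 ⟨z, W.mem_ball.2 ?_, mem_insert_of_mem (W.mem_neighbors.2 hyz.symm)⟩
    have hxz : W.G.dist x z + 1 ≤ W.G.dist x y := by
      rw [SimpleGraph.dist_comm (u := x) (v := y), ← hp, SimpleGraph.Walk.length_cons,
        SimpleGraph.dist_comm]
      exact Nat.succ_le_succ (SimpleGraph.dist_le q)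
    have : (W.G.dist x z : ℝ) + 1 ≤ W.G.dist x y := by exact_mod_cast hxz
    linarith

/-- `W.ControlledWeights` unfolds to `∃ p₀, 0 < p₀ ∧ W.ControlledWith p₀`. -/
def ControlledWith (p₀ : ℝ) : Prop :=
  ∀ x y : V, W.G.Adj x y → p₀ * W.nuV x ≤ W.nu x y

namespace ControlledWith

variable {W} {p₀ : ℝ}

theorem le_one (h : W.ControlledWith p₀) : p₀ ≤ 1 := by
  let x : V := Classical.arbitrary V
  obtain ⟨y, hy⟩ := W.connected.preconnected.exists_adj_of_nontrivial x
  have := (h x y hy).trans (W.nu_le_nuV hy)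
  nlinarith [W.nuV_pos x]

theorem mul_nuV_le_nuV_of_adj (h : W.ControlledWith p₀) {x y : V} (hxy : W.G.Adj x y) :
    p₀ * W.nuV x ≤ W.nuV y :=
  (h x y hxy).trans ((W.nu_symm x y).le.trans (W.nu_le_nuV hxy.symm))

theorem pow_length_mul_nuV_le (h : W.ControlledWith p₀) (hp : 0 ≤ p₀) {x y : V}
    (p : W.G.Walk x y) : p₀ ^ p.length * W.nuV x ≤ W.nuV y := by
  induction p with
  | nil => simp
  | @cons u v w huv q ih =>
    calc p₀ ^ (q.cons huv).length * W.nuV u = p₀ ^ q.length * (p₀ * W.nuV u) := by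
          rw [SimpleGraph.Walk.length_cons]; ring
      _ ≤ p₀ ^ q.length * W.nuV v := by gcongr; exact h.mul_nuV_le_nuV_of_adj huv
      _ ≤ W.nuV w := ih

theorem pow_mul_nuV_le_of_dist_le (h : W.ControlledWith p₀) (hp : 0 ≤ p₀) {x y : V} {n : ℕ}
    (hxy : W.G.dist x y ≤ n) : p₀ ^ n * W.nuV x ≤ W.nuV y := by
  obtain ⟨p, hpl⟩ := W.connected.exists_walk_length_eq_dist x y
  calc p₀ ^ n * W.nuV x ≤ p₀ ^ p.length * W.nuV x :=
        mul_le_mul_of_nonneg_right (pow_le_pow_of_le_one hp h.le_one (by omega)) (W.nuV_nonneg x)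
    _ ≤ W.nuV y := h.pow_length_mul_nuV_le hp p

theorem sum_nuV_neighbors_le (h : W.ControlledWith p₀) (hp : 0 < p₀) (x : V) :
    ∑ y ∈ (W.locallyFinite x).toFinset, W.nuV y ≤ p₀⁻¹ * W.nuV x := by
  rw [le_inv_mul_iff₀ hp, mul_sum]
  exact sum_le_sum fun y hy =>
    (h y x (W.mem_neighbors.1 hy).symm).trans (W.nu_symm y x).le

theorem vol_add_one_le (h : W.ControlledWith p₀) (hp : 0 < p₀) (x : V) {r : ℝ} (hr : 0 < r) :
    W.vol x (r + 1) ≤ (1 + p₀⁻¹) * W.vol x r := by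
  calc W.vol x (r + 1)
      ≤ ∑ z ∈ W.ball x r, ∑ y ∈ insert z (W.locallyFinite z).toFinset, W.nuV y :=
        (sum_le_sum_of_subset_of_nonneg (W.ball_add_one_subset x hr)
          fun y _ _ => W.nuV_nonneg y).trans (sum_biUnion_le_sum_sum _ _ W.nuV_nonneg)
    _ ≤ ∑ z ∈ W.ball x r, (1 + p₀⁻¹) * W.nuV z := by
        refine sum_le_sum fun z _ => ?_
        rw [sum_insert fun hz => W.G.irrefl (W.mem_neighbors.1 hz)]
        linarith [h.sum_nuV_neighbors_le hp z]
    _ = (1 + p₀⁻¹) * W.vol x r := (mul_sum _ _ _).symm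

theorem vol_natCast_add_one_le (h : W.ControlledWith p₀) (hp : 0 < p₀) (x : V) (n : ℕ) :
    W.vol x (n + 1) ≤ (1 + p₀⁻¹) ^ n * W.nuV x := by
  induction n with
  | zero => simp [vol_one]
  | succ n ih =>
    calc W.vol x ((n + 1 : ℕ) + 1) ≤ (1 + p₀⁻¹) * W.vol x (n + 1) := by
          push_cast; exact h.vol_add_one_le hp x (by positivity)
      _ ≤ (1 + p₀⁻¹) * ((1 + p₀⁻¹) ^ n * W.nuV x) := by gcongr
      _ = (1 + p₀⁻¹) ^ (n + 1) * W.nuV x := by ring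

/-- Every point of `B(x, n)` has weight at least `p₀ⁿ ν_x`, while the total weight is at most
`(1 + p₀⁻¹)ⁿ ν_x`. -/
theorem card_ball_le (h : W.ControlledWith p₀) (hp : 0 < p₀) (x : V) {r : ℝ} {n : ℕ}
    (hrn : r ≤ n) : (#(W.ball x r) : ℝ) ≤ ((1 + p₀⁻¹) / p₀) ^ n := by
  have hlow : (#(W.ball x r) : ℝ) * (p₀ ^ n * W.nuV x) ≤ W.vol x r := by
    rw [← nsmul_eq_mul]
    refine card_nsmul_le_sum _ _ _ fun y hy => h.pow_mul_nuV_le_of_dist_le hp.le ?_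
    exact_mod_cast ((W.mem_ball.1 hy).trans_le hrn).le
  have hup : W.vol x r ≤ (1 + p₀⁻¹) ^ n * W.nuV x :=
    (W.vol_mono x (by linarith)).trans (h.vol_natCast_add_one_le hp x n)
  have hpos : 0 < p₀ ^ n * W.nuV x := mul_pos (pow_pos hp n) (W.nuV_pos x)
  rw [div_pow, ← mul_div_mul_right _ _ (W.nuV_pos x).ne', le_div_iff₀ hpos]
  linarith

end ControlledWith

namespace ControlledWeights

variable {W}

theorem exists_vol_le_mul_nuV (h : W.ControlledWeights) (r : ℝ) :
    ∃ c : ℝ, 0 ≤ c ∧ ∀ x, W.vol x r ≤ c * W.nuV x := by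
  obtain ⟨p₀, hp, h⟩ := h
  refine ⟨(1 + p₀⁻¹) ^ ⌈r⌉₊, by positivity, fun x => ?_⟩
  exact (W.vol_mono x (by linarith [Nat.le_ceil r])).trans
    (ControlledWith.vol_natCast_add_one_le h hp x _)

theorem exists_card_ball_le (h : W.ControlledWeights) (r : ℝ) :
    ∃ N : ℝ, 0 ≤ N ∧ ∀ x, (#(W.ball x r) : ℝ) ≤ N := by
  obtain ⟨p₀, hp, h⟩ := h
  exact ⟨_, by positivity, fun x => ControlledWith.card_ball_le h hp x (Nat.le_ceil r)⟩

theorem vd_of_large_scales (h : W.ControlledWeights) {R₀ K : ℝ}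
    (hK : ∀ x R, R₀ ≤ R → W.vol x (2 * R) ≤ K * W.vol x R) : W.VD := by
  obtain ⟨c, -, hc⟩ := h.exists_vol_le_mul_nuV (2 * R₀)
  refine ⟨max (max c K) 1, by positivity, fun x R hR => ?_⟩
  have hcM : c ≤ max (max c K) 1 := (le_max_left _ _).trans (le_max_left _ _)
  have hKM : K ≤ max (max c K) 1 := (le_max_right _ _).trans (le_max_left _ _)
  rcases lt_or_ge R R₀ with hRR₀ | hRR₀
  · calc W.vol x (2 * R) ≤ W.vol x (2 * R₀) := W.vol_mono x (by linarith)
      _ ≤ c * W.nuV x := hc x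
      _ ≤ max (max c K) 1 * W.vol x R :=
          mul_le_mul hcM (W.nuV_le_vol x hR) (W.nuV_nonneg x) (by positivity)
  · exact (hK x R hRR₀).trans (mul_le_mul_of_nonneg_right hKM (W.vol_nonneg x R))

end ControlledWeights

theorem VD.exists_vol_mul_le {W : WeightedGraph V} (h : W.VD) (a : ℝ) :
    ∃ K : ℝ, 0 ≤ K ∧ ∀ x r, 0 < r → W.vol x (a * r) ≤ K * W.vol x r := by
  obtain ⟨C, hC, hdbl⟩ := h
  have hiter : ∀ k : ℕ, ∀ x r, 0 < r → W.vol x (2 ^ k * r) ≤ C ^ k * W.vol x r := by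
    intro k
    induction k with
    | zero => simp
    | succ k ih =>
      intro x r hr
      calc W.vol x (2 ^ (k + 1) * r) = W.vol x (2 ^ k * (2 * r)) := by ring_nf
        _ ≤ C ^ k * W.vol x (2 * r) := ih x _ (by positivity)
        _ ≤ C ^ k * (C * W.vol x r) := by gcongr; exact hdbl x r hr
        _ = C ^ (k + 1) * W.vol x r := by ring
  obtain ⟨k, hk⟩ := pow_unbounded_of_one_lt a one_lt_two
  exact ⟨C ^ k, by positivity, fun x r hr =>
    (W.vol_mono x (by gcongr)).trans (hiter k x r hr)⟩

end WeightedGraph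

section RoughIsometry

variable {V₁ V₂ : Type*} [Countable V₁] [Infinite V₁] [Countable V₂] [Infinite V₂]
  {W₁ : WeightedGraph V₁} {W₂ : WeightedGraph V₂} {φ : V₁ → V₂} {C₁ C₂ C₃ : ℝ}

theorem vol_target_le_mul_vol_source
    (hsurj : ∀ w, ∃ x, (W₂.G.dist (φ x) w : ℝ) < C₁)
    (hdist : ∀ x y, (W₁.G.dist x y : ℝ) ≤ C₂ * W₂.G.dist (φ x) (φ y) + C₁)
    (hvol : ∀ x, W₂.vol (φ x) C₁ ≤ C₃ * W₁.vol x C₁) (hC₂ : 0 < C₂) (hC₃ : 0 ≤ C₃)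
    {c : ℝ} (hc : ∀ x, W₁.vol x C₁ ≤ c * W₁.nuV x) {x₀ : V₁} {w : V₂}
    (hx₀ : (W₂.G.dist (φ x₀) w : ℝ) < C₁) (R : ℝ) :
    W₂.vol w R ≤ C₃ * c * W₁.vol x₀ (C₂ * (R + 2 * C₁) + C₁) := by
  have hcover : W₂.ball w R ⊆
      (W₁.ball x₀ (C₂ * (R + 2 * C₁) + C₁)).biUnion fun x => W₂.ball (φ x) C₁ := by
    intro z hz
    obtain ⟨x, hxz⟩ := hsurj z
    refine mem_biUnion.2 ⟨x, W₁.mem_ball.2 ?_, W₂.mem_ball.2 hxz⟩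
    have h₁ := W₂.dist_le_dist_add_dist (φ x₀) w (φ x)
    have h₂ := W₂.dist_le_dist_add_dist w z (φ x)
    rw [SimpleGraph.dist_comm (u := z) (v := φ x)] at h₂
    have h₃ : C₂ * W₂.G.dist (φ x₀) (φ x) < C₂ * (R + 2 * C₁) := by
      gcongr; linarith [W₂.mem_ball.1 hz]
    linarith [hdist x₀ x]
  calc W₂.vol w R
      ≤ ∑ x ∈ W₁.ball x₀ (C₂ * (R + 2 * C₁) + C₁), W₂.vol (φ x) C₁ :=
        (sum_le_sum_of_subset_of_nonneg hcover fun y _ _ => W₂.nuV_nonneg y).trans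
          (sum_biUnion_le_sum_sum _ _ W₂.nuV_nonneg)
    _ ≤ ∑ x ∈ W₁.ball x₀ (C₂ * (R + 2 * C₁) + C₁), C₃ * c * W₁.nuV x :=
        sum_le_sum fun x _ => (hvol x).trans (by rw [mul_assoc]; gcongr; exact hc x)
    _ = C₃ * c * W₁.vol x₀ (C₂ * (R + 2 * C₁) + C₁) := (mul_sum _ _ _).symm

theorem vol_source_le_mul_vol_target
    (hdist_le : ∀ x y, (W₂.G.dist (φ x) (φ y) : ℝ) ≤ C₂ * (W₁.G.dist x y + C₁))
    (hdist_ge : ∀ x y, (W₁.G.dist x y : ℝ) ≤ C₂ * W₂.G.dist (φ x) (φ y) + C₁)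
    (hvol : ∀ x, W₁.vol x C₁ ≤ C₃ * W₂.vol (φ x) C₁) (hC₁ : 0 < C₁) (hC₂ : 0 < C₂)
    (hC₃ : 0 ≤ C₃) {N : ℝ} (hN : ∀ x, (#(W₁.ball x (2 * C₂ * C₁ + C₁)) : ℝ) ≤ N)
    {x₀ : V₁} {w : V₂} (hx₀ : (W₂.G.dist (φ x₀) w : ℝ) < C₁) (r : ℝ) :
    W₁.vol x₀ r ≤ C₃ * N * W₂.vol w (C₂ * (r + C₁) + 2 * C₁) := by
  set S := W₁.ball x₀ r
  have hsub : S.biUnion (fun x => W₂.ball (φ x) C₁) ⊆ W₂.ball w (C₂ * (r + C₁) + 2 * C₁) := by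
    intro z hz
    obtain ⟨x, hx, hxz⟩ := mem_biUnion.1 hz
    have h₁ := W₂.dist_le_dist_add_dist w (φ x₀) z
    have h₂ := W₂.dist_le_dist_add_dist (φ x₀) (φ x) z
    rw [SimpleGraph.dist_comm (u := w) (v := φ x₀)] at h₁
    have h₃ : C₂ * (W₁.G.dist x₀ x + C₁) < C₂ * (r + C₁) := by
      gcongr; exact W₁.mem_ball.1 hx
    rw [W₂.mem_ball]
    linarith [hdist_le x₀ x, W₂.mem_ball.1 hxz]
  -- points of `S` whose images share a point of a `C₁`-ball are `(2 C₂ C₁ + C₁)`-close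
  have hmult : ∀ x' ∈ S, ∀ z ∈ W₂.ball (φ x') C₁,
      (#{x ∈ S | z ∈ W₂.ball (φ x) C₁} : ℝ) ≤ N := by
    intro x' _ z hz
    refine le_trans ?_ (hN x')
    suffices {x ∈ S | z ∈ W₂.ball (φ x) C₁} ⊆ W₁.ball x' (2 * C₂ * C₁ + C₁) by
      exact_mod_cast card_le_card this
    refine fun x hx => W₁.mem_ball.2 ?_
    have h₁ := W₂.dist_le_dist_add_dist (φ x') z (φ x)
    rw [SimpleGraph.dist_comm (u := z) (v := φ x)] at h₁
    have h₂ : C₂ * W₂.G.dist (φ x') (φ x) < C₂ * (2 * C₁) := by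
      gcongr
      linarith [W₂.mem_ball.1 hz, W₂.mem_ball.1 (mem_filter.1 hx).2]
    linarith [hdist_ge x' x]
  calc W₁.vol x₀ r = ∑ x ∈ S, W₁.nuV x := rfl
    _ ≤ ∑ x ∈ S, C₃ * W₂.vol (φ x) C₁ :=
        sum_le_sum fun x _ => (W₁.nuV_le_vol x hC₁).trans (hvol x)
    _ = C₃ * ∑ x ∈ S, ∑ z ∈ W₂.ball (φ x) C₁, W₂.nuV z := (mul_sum _ _ _).symm
    _ ≤ C₃ * (N * W₂.vol w (C₂ * (r + C₁) + 2 * C₁)) := by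
        gcongr
        refine (sum_sum_le_mul_sum_biUnion _ _ W₂.nuV_nonneg hmult).trans ?_
        gcongr
        · exact (hN x₀).trans' (by positivity)
        · exact sum_le_sum_of_subset_of_nonneg hsub fun y _ _ => W₂.nuV_nonneg y
    _ = C₃ * N * W₂.vol w (C₂ * (r + C₁) + 2 * C₁) := by ring

theorem GraphRoughIsometry.exists_vol_comparison (hφ : GraphRoughIsometry W₁ W₂ φ)
    (hcw : W₁.ControlledWeights) :
    ∃ A α : ℝ, 0 ≤ A ∧ 1 ≤ α ∧ ∀ w : V₂, ∃ x₀ : V₁, ∀ R, 1 ≤ R →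
      W₂.vol w R ≤ A * W₁.vol x₀ (α * R) ∧ W₁.vol x₀ R ≤ A * W₂.vol w (α * R) := by
  obtain ⟨C₁, C₂, C₃, hC₁, hC₂, hC₃, hsurj, hdist, hvol⟩ := hφ
  obtain ⟨c, hc0, hc⟩ := hcw.exists_vol_le_mul_nuV C₁
  obtain ⟨N, hN0, hN⟩ := hcw.exists_card_ball_le (2 * C₂ * C₁ + C₁)
  have hdist_ge : ∀ x y, (W₁.G.dist x y : ℝ) ≤ C₂ * W₂.G.dist (φ x) (φ y) + C₁ := fun x y => by
    have := (inv_mul_le_iff₀ (by linarith)).1 (hdist x y).1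
    linarith
  have hvol_ge : ∀ x, W₁.vol x C₁ ≤ C₃ * W₂.vol (φ x) C₁ := fun x =>
    (inv_mul_le_iff₀ (by linarith)).1 (hvol x).1
  set A := max (C₃ * c) (C₃ * N)
  set α := C₂ + 2 * C₂ * C₁ + 2 * C₁ + 1
  have hscale : ∀ R : ℝ, 1 ≤ R →
      C₂ * (R + 2 * C₁) + C₁ ≤ α * R ∧ C₂ * (R + C₁) + 2 * C₁ ≤ α * R := fun R hR => by
    have := mul_nonneg (mul_nonneg hC₁.le (by linarith : (0 : ℝ) ≤ C₂)) (sub_nonneg.2 hR)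
    constructor <;> nlinarith
  refine ⟨A, α, by positivity, by nlinarith, fun w => ?_⟩
  obtain ⟨x₀, hx₀⟩ := hsurj w
  refine ⟨x₀, fun R hR => ⟨?_, ?_⟩⟩
  · calc W₂.vol w R ≤ C₃ * c * W₁.vol x₀ (C₂ * (R + 2 * C₁) + C₁) :=
          vol_target_le_mul_vol_source hsurj hdist_ge (fun x => (hvol x).2) (by linarith)
            (by linarith) hc hx₀ R
      _ ≤ A * W₁.vol x₀ (α * R) := mul_le_mul (le_max_left _ _)
          (W₁.vol_mono x₀ (hscale R hR).1) (W₁.vol_nonneg _ _) (by positivity)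
  · calc W₁.vol x₀ R ≤ C₃ * N * W₂.vol w (C₂ * (R + C₁) + 2 * C₁) :=
          vol_source_le_mul_vol_target (fun x y => (hdist x y).2) hdist_ge hvol_ge hC₁
            (by linarith) (by linarith) hN hx₀ R
      _ ≤ A * W₂.vol w (α * R) := mul_le_mul (le_max_right _ _)
          (W₂.vol_mono w (hscale R hR).2) (W₂.vol_nonneg _ _) (by positivity)

end RoughIsometry

/-- Volume doubling is stable under rough isometries of weighted graphs with
controlled weights. -/
theorem vd_stable_under_rough_isometry {V₁ V₂ : Type*}
    [Countable V₁] [Infinite V₁] [Countable V₂] [Infinite V₂]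
    (W₁ : WeightedGraph V₁) (W₂ : WeightedGraph V₂)
    (hcw₁ : W₁.ControlledWeights) (hcw₂ : W₂.ControlledWeights)
    (φ : V₁ → V₂) (hφ : GraphRoughIsometry W₁ W₂ φ)
    (hVD : W₁.VD) : W₂.VD := by
  obtain ⟨A, α, hA, hα, hcomp⟩ := hφ.exists_vol_comparison hcw₁
  obtain ⟨K, hK, hscale⟩ := hVD.exists_vol_mul_le (2 * α ^ 2)
  refine hcw₂.vd_of_large_scales (R₀ := α) (K := A * K * A) fun w R hR => ?_
  obtain ⟨x₀, hx₀⟩ := hcomp w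
  have hα0 : 0 < α := by linarith
  have hRα : 1 ≤ R / α := (one_le_div hα0).2 hR
  calc W₂.vol w (2 * R) ≤ A * W₁.vol x₀ (α * (2 * R)) := (hx₀ _ (by linarith)).1
    _ = A * W₁.vol x₀ (2 * α ^ 2 * (R / α)) := by congr 2; field_simp
    _ ≤ A * (K * W₁.vol x₀ (R / α)) := by gcongr; exact hscale x₀ _ (by positivity)
    _ ≤ A * (K * (A * W₂.vol w (α * (R / α)))) := by gcongr; exact (hx₀ _ hRα).2
    _ = A * K * A * W₂.vol w R := by rw [mul_div_cancel₀ _ hα0.ne']; ring
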